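/- If w = [w'; φ, γ] is an ordinary augmentation of a valuation w' on K(X), then Φ(w', w) = [φ]_{w'}, the set of key polynomials for w' that are w'-equivalent to φ. -/

import Mathlib

namespace MLV

open Polynomial

/-- An additive valuation on a commutative ring `R` with values in `Γ ∪ {∞}`
(written additively, with the `min` convention), thought of as the restriction
to `R` of a valuation on its fraction field. -/
structure ValOn (R : Type*) [CommRing R] (Γ : Type*) [AddCommGroup Γ] [LinearOrder Γ] [IsOrderedAddMonoid Γ] where
  toFun : R → WithTop Γ
  map_zero' : toFun 0 = ⊤
  ne_top' : ∀ f : R, f ≠ 0 → toFun f ≠ ⊤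
  map_mul' : ∀ f g : R, toFun (f * g) = toFun f + toFun g
  add_min' : ∀ f g : R, min (toFun f) (toFun g) ≤ toFun (f + g)

variable {K : Type*} [Field K] {Γ : Type*} [AddCommGroup Γ] [LinearOrder Γ] [IsOrderedAddMonoid Γ]

/-- `w` (a valuation on `K(X)`, restricted to `K[X]`) extends the valuation `v` of `K`. -/
def Extends (w : ValOn (Polynomial K) Γ) (v : ValOn K Γ) : Prop :=
  ∀ c : K, w.toFun (C c) = v.toFun c

/-- `wbar` (a valuation on `K̄(X)`) is a common extension of `w` and of `vbar`. -/
def IsCommonExt {L : Type*} [Field L] [Algebra K L]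
    (wbar : ValOn (Polynomial L) Γ) (w : ValOn (Polynomial K) Γ) (vbar : ValOn L Γ) : Prop :=
  (∀ f : Polynomial K, wbar.toFun (f.map (algebraMap K L)) = w.toFun f) ∧
  (∀ c : L, wbar.toFun (C c) = vbar.toFun c)

/-- `δ(f) = max { w̄(X - α) : α ∈ K̄, f(α) = 0 }` (as an element of `WithBot (WithTop Γ)`,
the value `⊥` corresponding to a polynomial without roots). -/
noncomputable def delta {L : Type*} [Field L] [Algebra K L]
    (wbar : ValOn (Polynomial L) Γ) (f : Polynomial K) : WithBot (WithTop Γ) :=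
  (((f.map (algebraMap K L)).roots).map
    fun α => ((wbar.toFun (X - C α) : WithTop Γ) : WithBot (WithTop Γ))).sup

/-- `Q` is an abstract key polynomial for `w` (with respect to the common extension `wbar`
computing `δ`): `Q` is monic and `δ(f) < δ(Q)` for every nonzero `f` with `deg f < deg Q`. -/
def IsABKP {L : Type*} [Field L] [Algebra K L]
    (wbar : ValOn (Polynomial L) Γ) (Q : Polynomial K) : Prop :=
  Q.Monic ∧ ∀ f : Polynomial K, f ≠ 0 → f.degree < Q.degree → delta wbar f < delta wbar Q

/-- The `Q`-truncation `w_Q` of `w`: on the `Q`-expansion `f = ∑ fᵢ Qⁱ` it equals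
`min_i w(fᵢ Qⁱ)`. -/
noncomputable def truncVal (w : ValOn (Polynomial K) Γ) (Q f : Polynomial K) : WithTop Γ :=
  (Finset.range (f.natDegree + 1)).inf fun i => w.toFun ((f /ₘ Q ^ i) %ₘ Q * Q ^ i)

/-- `f ∼_u g` : `u(f - g) > u f = u g`. -/
def EquivMod (u : Polynomial K → WithTop Γ) (f g : Polynomial K) : Prop :=
  u f < u (f - g) ∧ u f = u g

/-- `f ∣_u g` : `g ∼_u f h` for some `h`. -/
def DvdMod (u : Polynomial K → WithTop Γ) (f g : Polynomial K) : Prop :=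
  ∃ h : Polynomial K, EquivMod u g (f * h)

/-- A key polynomial for `u`: monic, `u`-irreducible and `u`-minimal. -/
def IsKeyPol (u : Polynomial K → WithTop Γ) (φ : Polynomial K) : Prop :=
  φ.Monic ∧
  (∀ h q : Polynomial K, DvdMod u φ (h * q) → DvdMod u φ h ∨ DvdMod u φ q) ∧
  (∀ h : Polynomial K, h ≠ 0 → DvdMod u φ h → φ.degree ≤ h.degree)

/-- A key polynomial for `u` of minimal degree (i.e. of degree `deg(u)`). -/
def IsMinKeyPol (u : Polynomial K → WithTop Γ) (φ : Polynomial K) : Prop :=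
  IsKeyPol u φ ∧ ∀ ψ : Polynomial K, IsKeyPol u ψ → φ.degree ≤ ψ.degree

/-- `u ≤ u'` pointwise on `K[X]`. -/
def FnLe (u u' : Polynomial K → WithTop Γ) : Prop :=
  ∀ f : Polynomial K, u f ≤ u' f

/-- `u < u'` : `u ≤ u'` and `u f < u' f` for some `f`. -/
def FnLt (u u' : Polynomial K → WithTop Γ) : Prop :=
  FnLe u u' ∧ ∃ f : Polynomial K, u f < u' f

/-- `g ∈ Φ(u, u')` : `g` is monic of minimal degree with `u g < u' g`. -/
def InPhi (u u' : Polynomial K → WithTop Γ) (g : Polynomial K) : Prop :=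
  g.Monic ∧ u g < u' g ∧
  ∀ h : Polynomial K, h.Monic → u h < u' h → g.degree ≤ h.degree

/-- The value at `f` of the augmented valuation `[u; φ, γ]`, computed via the
`φ`-expansion `f = ∑ fᵢ φⁱ` as `min_i (u fᵢ + i γ)`. -/
noncomputable def augVal (u : Polynomial K → WithTop Γ) (φ : Polynomial K) (γ : Γ)
    (f : Polynomial K) : WithTop Γ :=
  (Finset.range (f.natDegree + 1)).inf
    fun i => u ((f /ₘ φ ^ i) %ₘ φ) + i • ((γ : WithTop Γ))

/-- `u' = [u; φ, γ]` is the ordinary augmentation of `u` at the key polynomial `φ`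
with value `γ > u φ`. -/
def IsOrdAug (u : Polynomial K → WithTop Γ) (φ : Polynomial K) (γ : Γ)
    (u' : Polynomial K → WithTop Γ) : Prop :=
  IsKeyPol u φ ∧ u φ < (γ : WithTop Γ) ∧ ∀ f : Polynomial K, u' f = augVal u φ γ f

/-- A continuous family of augmentations `(ρ_i = [w'; χ_i, γ_i])_{i ∈ ι}` of `w'`. -/
structure ContFamily (w' : ValOn (Polynomial K) Γ) (ι : Type*) [LinearOrder ι] where
  chi : ι → Polynomial K
  gam : ι → Γ
  rho : ι → ValOn (Polynomial K) Γ
  no_last : ∀ i : ι, ∃ j : ι, i < j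
  gam_mono : StrictMono gam
  aug : ∀ i : ι, IsOrdAug w'.toFun (chi i) (gam i) (rho i).toFun
  deg_eq : ∀ i j : ι, (chi i).degree = (chi j).degree
  key_step : ∀ i j : ι, i < j → IsKeyPol (rho i).toFun (chi j)
  not_equiv : ∀ i j : ι, i < j → ¬ EquivMod (rho i).toFun (chi j) (chi i)
  step : ∀ i j : ι, i < j → IsOrdAug (rho i).toFun (chi j) (gam j) (rho j).toFun

/-- `f` is `W`-stable with stable value `c`. -/
def StableAt {w' : ValOn (Polynomial K) Γ} {ι : Type*} [LinearOrder ι]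
    (F : ContFamily w' ι) (f : Polynomial K) (c : WithTop Γ) : Prop :=
  ∃ i0 : ι, ∀ i : ι, i0 ≤ i → (F.rho i).toFun f = c

/-- `f` is `W`-stable. -/
def IsStable {w' : ValOn (Polynomial K) Γ} {ι : Type*} [LinearOrder ι]
    (F : ContFamily w' ι) (f : Polynomial K) : Prop :=
  ∃ c : WithTop Γ, StableAt F f c

/-- The valuation `w` is the stable limit of the family `F`. -/
def IsStableLimit {w' : ValOn (Polynomial K) Γ} {ι : Type*} [LinearOrder ι]
    (F : ContFamily w' ι) (w : ValOn (Polynomial K) Γ) : Prop :=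
  ∀ f : Polynomial K, StableAt F f (w.toFun f)

/-- `Q` is a MacLane–Vaquié limit key polynomial for `F`: monic, `F`-unstable,
of minimal degree among unstable polynomials. -/
def IsLimitKP {w' : ValOn (Polynomial K) Γ} {ι : Type*} [LinearOrder ι]
    (F : ContFamily w' ι) (Q : Polynomial K) : Prop :=
  Q.Monic ∧ ¬ IsStable F Q ∧ ∀ g : Polynomial K, ¬ IsStable F g → Q.degree ≤ g.degree

/-- The continuous family `F` is essential: `deg(W) < m_∞ < ∞`. -/
def IsEssential {w' : ValOn (Polynomial K) Γ} {ι : Type*} [LinearOrder ι]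
    (F : ContFamily w' ι) : Prop :=
  (∃ f : Polynomial K, ¬ IsStable F f) ∧
  ∀ (i : ι) (f : Polynomial K), ¬ IsStable F f → (F.chi i).degree < f.degree

/-- `w = [F; Q, γ]` is the limit augmentation of the family `F` at the limit key
polynomial `Q` with value `γ`: on `Q`-expansions, `w f = min_i (ρ_W(fᵢ) + iγ)`, which
since the coefficients are stable is the eventual value of `[ρ_i; Q, γ]` on `f`. -/
def IsLimitAug {w' : ValOn (Polynomial K) Γ} {ι : Type*} [LinearOrder ι]
    (F : ContFamily w' ι) (Q : Polynomial K) (γ : Γ)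
    (w : ValOn (Polynomial K) Γ) : Prop :=
  IsLimitKP F Q ∧ (∀ i : ι, (F.rho i).toFun Q < (γ : WithTop Γ)) ∧
  ∀ f : Polynomial K, ∃ i0 : ι, ∀ i : ι, i0 ≤ i → w.toFun f = augVal (F.rho i).toFun Q γ f

/-- `w` is a depth-zero valuation `w_{α,δ}` over `v`. -/
def IsDepthZero (v : ValOn K Γ) (w : ValOn (Polynomial K) Γ) : Prop :=
  ∃ (α : K) (d : Γ), ∀ f : Polynomial K,
    w.toFun f = (Finset.range (f.natDegree + 1)).inf
      fun i => v.toFun (((Polynomial.taylor α) f).coeff i) + i • ((d : WithTop Γ))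

/-- An ordinary augmentation step of a MacLane–Vaquié chain:
`u' = [u; φ, γ]` with `deg(u) < deg Φ(u, u')`. -/
def OrdMLVStep (u u' : Polynomial K → WithTop Γ) (φ : Polynomial K) (γ : Γ) : Prop :=
  IsOrdAug u φ γ u' ∧
  ∀ ψ g : Polynomial K, IsMinKeyPol u ψ → InPhi u u' g → ψ.degree < g.degree

/-- A limit augmentation step of a MacLane–Vaquié chain, with the underlying essential
continuous family `F` made explicit: `w = [F; φ, γ]`, `deg(w') = deg Φ(w', w)` and
`φprev ∉ Φ(w', w)`. -/
def LimMLVStepWith {w' : ValOn (Polynomial K) Γ} {ι : Type*} [LinearOrder ι]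
    (F : ContFamily w' ι) (w : ValOn (Polynomial K) Γ)
    (φprev φ : Polynomial K) (γ : Γ) : Prop :=
  IsEssential F ∧ IsLimitAug F φ γ w ∧
  (∀ ψ g : Polynomial K, IsMinKeyPol w'.toFun ψ → InPhi w'.toFun w.toFun g →
    ψ.degree = g.degree) ∧
  ¬ InPhi w'.toFun w.toFun φprev

/-- A limit augmentation step of a MacLane–Vaquié chain (the underlying essential
continuous family being existentially quantified). -/
def LimMLVStep (w' w : ValOn (Polynomial K) Γ) (φprev φ : Polynomial K) (γ : Γ) : Prop :=
  ∃ (ι : Type) (li : LinearOrder ι) (F : @ContFamily K _ Γ _ _ _ w' ι li),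
    @LimMLVStepWith K _ Γ _ _ _ w' ι li F w φprev φ γ

/-- Membership in the index set `I`: `I = ℕ` if `o = none`, and `I = {0, …, N}`
if `o = some N`. -/
def InIdx (o : Option ℕ) (j : ℕ) : Prop :=
  ∀ N : ℕ, o = some N → j ≤ N

/-- An induced complete sequence `{Q_i}_{i ∈ Δ}` of abstract key polynomials for `w`:
a complete sequence of ABKPs, organized in blocks `Δ_j = {j} ∪ ϑ_j` (for `j` in
`I = {0,…,N}` or `I = ℕ`), satisfying the properties of Remark 1.3.  Here `blk i`
is the block of an index `i ∈ Δ`, `main j ∈ Δ` is the distinguished first element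
of the block `Δ_j`, and `ϑ_j = {i ∈ Δ | blk i = j, i ≠ main j}`. -/
structure ICS {L : Type*} [Field L] [Algebra K L]
    (wbar : ValOn (Polynomial L) Γ) (w : ValOn (Polynomial K) Γ)
    (Δ : Type*) [LinearOrder Δ] where
  Q : Δ → Polynomial K
  abkp : ∀ i : Δ, IsABKP wbar (Q i)
  wf : WellFoundedLT Δ
  delta_mono : ∀ i i' : Δ, i < i' → delta wbar (Q i) < delta wbar (Q i')
  wval_mono : ∀ i i' : Δ, i < i' → w.toFun (Q i) < w.toFun (Q i')
  complete : ∀ f : Polynomial K, f ≠ 0 →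
    ∃ i : Δ, (Q i).degree ≤ f.degree ∧ truncVal w (Q i) f = w.toFun f
  Ifin : Option ℕ
  blk : Δ → ℕ
  main : ℕ → Δ
  blk_mono : ∀ i i' : Δ, i ≤ i' → blk i ≤ blk i'
  blk_mem : ∀ i : Δ, InIdx Ifin (blk i)
  blk_main : ∀ j : ℕ, InIdx Ifin j → blk (main j) = j
  main_min : ∀ (j : ℕ) (i : Δ), blk i = j → main j ≤ i
  theta_no_last : ∀ i : Δ, i ≠ main (blk i) →
    ∃ i' : Δ, blk i' = blk i ∧ i' ≠ main (blk i) ∧ i < i'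
  deg_blk_eq : ∀ i i' : Δ, blk i = blk i' → (Q i).degree = (Q i').degree
  deg_blk_lt : ∀ i i' : Δ, blk i < blk i' → (Q i).degree < (Q i').degree
  degQ0 : (Q (main 0)).degree = 1

/-!
Below `deg φ` the `φ`-expansion of `f` is `f` itself, so `[w'; φ, γ]` agrees with `w'` there;
a monic `g` of degree `deg φ` has expansion `(g - φ) + 1 · φ`, so `w g = min (w' (g - φ)) γ`.
Hence `Φ(w', w)` consists of the monic `g` of degree `deg φ` with `w' g < w' (g - φ)`, that is,
with `g ∼_{w'} φ`; and `w'`-equivalence between polynomials of the same degree preserves being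
a key polynomial.
-/

namespace ValOn

variable (w : ValOn (Polynomial K) Γ)

lemma map_one : w.toFun 1 = 0 := by
  have h := w.map_mul' 1 1
  rw [mul_one] at h
  lift w.toFun 1 to Γ using w.ne_top' 1 one_ne_zero with c
  rw [← WithTop.coe_add, WithTop.coe_inj] at h
  exact_mod_cast left_eq_add.mp h

lemma map_neg (f : Polynomial K) : w.toFun (-f) = w.toFun f := by
  have hsq := w.map_mul' (-1) (-1)
  rw [neg_mul_neg, one_mul, w.map_one] at hsq
  have hunit : w.toFun (-1) = 0 := by
    lift w.toFun (-1) to Γ using w.ne_top' (-1) (neg_ne_zero.mpr one_ne_zero) with c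
    rw [← WithTop.coe_add, eq_comm, WithTop.coe_eq_zero, ← two_nsmul] at hsq
    exact_mod_cast two_nsmul_eq_zero.mp hsq
  rw [neg_eq_neg_one_mul, w.map_mul', hunit, zero_add]

lemma map_sub_comm (f g : Polynomial K) : w.toFun (f - g) = w.toFun (g - f) := by
  rw [← w.map_neg, neg_sub]

lemma min_le_map_sub (f g : Polynomial K) :
    min (w.toFun f) (w.toFun g) ≤ w.toFun (f - g) := by
  simpa only [sub_eq_add_neg, w.map_neg] using w.add_min' f (-g)

end ValOn

variable {w : ValOn (Polynomial K) Γ}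

namespace EquivMod

lemma symm {f g : Polynomial K} (h : EquivMod w.toFun f g) : EquivMod w.toFun g f :=
  ⟨by rw [w.map_sub_comm, ← h.2]; exact h.1, h.2.symm⟩

lemma trans {f g h : Polynomial K} (hfg : EquivMod w.toFun f g) (hgh : EquivMod w.toFun g h) :
    EquivMod w.toFun f h := by
  refine ⟨?_, hfg.2.trans hgh.2⟩
  calc w.toFun f < min (w.toFun (f - g)) (w.toFun (g - h)) :=
        lt_min hfg.1 (hfg.2 ▸ hgh.1)
    _ ≤ w.toFun (f - h) := by
        simpa only [add_sub_add_comm, sub_add_sub_cancel] using w.add_min' (f - g) (g - h)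

lemma mul_right {f g : Polynomial K} (h : EquivMod w.toFun f g) {r : Polynomial K}
    (hr : r ≠ 0) : EquivMod w.toFun (f * r) (g * r) := by
  rw [EquivMod, ← sub_mul, w.map_mul', w.map_mul', w.map_mul', h.2]
  exact ⟨WithTop.add_lt_add_right (w.ne_top' r hr) (h.2 ▸ h.1), rfl⟩

end EquivMod

lemma equivMod_of_lt_map_sub {f g : Polynomial K} (h : w.toFun f < w.toFun (f - g)) :
    EquivMod w.toFun f g := by
  refine ⟨h, le_antisymm ?_ ?_⟩
  · have := w.min_le_map_sub f (f - g)
    rw [sub_sub_cancel, min_le_iff] at this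
    exact this.elim id fun h' => h.le.trans h'
  · have := w.add_min' (f - g) g
    rw [sub_add_cancel, min_le_iff] at this
    exact this.resolve_left (not_le.mpr h)

lemma DvdMod.of_equivMod {φ g f : Polynomial K} (hgφ : EquivMod w.toFun g φ)
    (hφf : DvdMod w.toFun φ f) : DvdMod w.toFun g f := by
  obtain ⟨r, hr⟩ := hφf
  have hr0 : r ≠ 0 := by
    rintro rfl
    rw [EquivMod, mul_zero, sub_zero] at hr
    exact lt_irrefl _ hr.1
  exact ⟨r, hr.trans (hgφ.symm.mul_right hr0)⟩

lemma IsKeyPol.degree_le_of_equivMod {φ g : Polynomial K} (hφ : IsKeyPol w.toFun φ)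
    (hg : g ≠ 0) (h : EquivMod w.toFun g φ) : φ.degree ≤ g.degree :=
  hφ.2.2 g hg ⟨1, by rwa [mul_one]⟩

lemma IsKeyPol.of_equivMod {φ g : Polynomial K} (hφ : IsKeyPol w.toFun φ) (hg : g.Monic)
    (hdeg : g.degree = φ.degree) (h : EquivMod w.toFun g φ) : IsKeyPol w.toFun g := by
  refine ⟨hg, fun a b hab => ?_, fun a ha0 ha => ?_⟩
  · exact (hφ.2.1 a b (hab.of_equivMod h.symm)).imp (·.of_equivMod h) (·.of_equivMod h)
  · exact hdeg ▸ hφ.2.2 a ha0 (ha.of_equivMod h.symm)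

lemma _root_.Polynomial.Monic.degree_pow_eq_natCast {φ : Polynomial K} (hφ : φ.Monic) (i : ℕ) :
    (φ ^ i).degree = (i * φ.natDegree : ℕ) := by
  rw [degree_eq_natDegree (hφ.pow i).ne_zero, hφ.natDegree_pow]

section AugVal

variable {φ : Polynomial K} (hφ : φ.Monic) (γ : Γ)
include hφ

lemma augVal_of_degree_lt {f : Polynomial K} (hf : f.degree < φ.degree) :
    augVal w.toFun φ γ f = w.toFun f := by
  have hf_mod : f %ₘ φ = f := (modByMonic_eq_self_iff hφ).mpr hf
  refine le_antisymm ?_ (Finset.le_inf fun i _ => ?_)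
  · refine (Finset.inf_le (Finset.mem_range.mpr (Nat.succ_pos _))).trans ?_
    rw [pow_zero, divByMonic_one, hf_mod, zero_smul, add_zero]
  rcases Nat.eq_zero_or_pos i with rfl | hi
  · rw [pow_zero, divByMonic_one, hf_mod, zero_smul, add_zero]
  · have : f /ₘ φ ^ i = 0 := by
      rw [divByMonic_eq_zero_iff (hφ.pow i)]
      refine hf.trans_le ?_
      rw [hφ.degree_pow_eq_natCast, degree_eq_natDegree hφ.ne_zero]
      exact_mod_cast Nat.le_mul_of_pos_left _ hi
    rw [this, zero_modByMonic, w.map_zero', top_add]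
    exact le_top

lemma augVal_of_degree_eq (hφ0 : 0 < φ.degree) {g : Polynomial K} (hg : g.Monic)
    (hdeg : g.degree = φ.degree) :
    augVal w.toFun φ γ g = min (w.toFun (g - φ)) γ := by
  have hsub : (g - φ).degree < φ.degree :=
    hdeg ▸ degree_sub_lt_left hdeg hg.ne_zero (by rw [hg.leadingCoeff, hφ.leadingCoeff])
  obtain ⟨hdiv, hmod⟩ : g /ₘ φ = 1 ∧ g %ₘ φ = g - φ :=
    div_modByMonic_unique 1 (g - φ) hφ ⟨by ring, hsub⟩
  have hg_natDeg : 0 < g.natDegree := natDegree_pos_iff_degree_pos.mpr (hdeg ▸ hφ0)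
  have term0 : w.toFun ((g /ₘ φ ^ 0) %ₘ φ) + (0 : ℕ) • (γ : WithTop Γ) = w.toFun (g - φ) := by
    rw [pow_zero, divByMonic_one, hmod, zero_smul, add_zero]
  have term1 : w.toFun ((g /ₘ φ ^ 1) %ₘ φ) + (1 : ℕ) • (γ : WithTop Γ) = γ := by
    rw [pow_one, hdiv, (modByMonic_eq_self_iff hφ).mpr (by rwa [degree_one]), w.map_one,
      one_smul, zero_add]
  refine le_antisymm (le_min ?_ ?_) (Finset.le_inf fun i _ => ?_)
  · exact (Finset.inf_le (Finset.mem_range.mpr (Nat.succ_pos _))).trans_eq term0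
  · exact (Finset.inf_le (Finset.mem_range.mpr (by omega))).trans_eq term1
  match i with
  | 0 => exact (min_le_left _ _).trans_eq term0.symm
  | 1 => exact (min_le_right _ _).trans_eq term1.symm
  | n + 2 =>
    have hlt : g.degree < (φ ^ (n + 2)).degree := by
      have hφ_natDeg : 0 < φ.natDegree := natDegree_pos_iff_degree_pos.mpr hφ0
      rw [hdeg, hφ.degree_pow_eq_natCast, degree_eq_natDegree hφ.ne_zero]
      exact_mod_cast by nlinarith
    rw [(divByMonic_eq_zero_iff (hφ.pow _)).mpr hlt, zero_modByMonic, w.map_zero', top_add]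
    exact le_top

end AugVal

namespace IsOrdAug

variable {w' : ValOn (Polynomial K) Γ} {φ : Polynomial K} {γ : Γ}
  (haug : IsOrdAug w'.toFun φ γ w.toFun)
include haug

/-- `φ = 1` is a key polynomial for every valuation, but `[w'; 1, γ]` would give `w 1 = ⊤`. -/
lemma degree_pos : 0 < φ.degree := by
  by_contra hφ0
  rw [not_lt, Monic.degree_le_zero_iff_eq_one haug.1.1] at hφ0
  apply w.ne_top' 1 one_ne_zero
  simp [haug.2.2, hφ0, augVal, w'.map_zero']

lemma apply_of_degree_lt {f : Polynomial K} (hf : f.degree < φ.degree) :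
    w.toFun f = w'.toFun f := by
  rw [haug.2.2, augVal_of_degree_lt haug.1.1 γ hf]

lemma apply_of_degree_eq {g : Polynomial K} (hg : g.Monic) (hdeg : g.degree = φ.degree) :
    w.toFun g = min (w'.toFun (g - φ)) γ := by
  rw [haug.2.2, augVal_of_degree_eq haug.1.1 γ haug.degree_pos hg hdeg]

lemma apply_self : w.toFun φ = γ := by
  rw [haug.apply_of_degree_eq haug.1.1 rfl, sub_self, w'.map_zero', min_eq_right le_top]

lemma degree_le_of_lt {f : Polynomial K} (hlt : w'.toFun f < w.toFun f) :
    φ.degree ≤ f.degree :=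
  not_lt.mp fun hf => hlt.ne (haug.apply_of_degree_lt hf).symm

end IsOrdAug

/-- if `w = [w'; φ, γ]` is an ordinary augmentation,
then `Φ(w', w) = [φ]_{w'}`. -/
theorem phi_of_ordinary_augmentation
    {K : Type*} [Field K] {Γ : Type*} [AddCommGroup Γ] [LinearOrder Γ] [IsOrderedAddMonoid Γ]
    (w' w : ValOn (Polynomial K) Γ) (φ : Polynomial K) (γ : Γ)
    (haug : IsOrdAug w'.toFun φ γ w.toFun) :
    ∀ g : Polynomial K, InPhi w'.toFun w.toFun g ↔
      (IsKeyPol w'.toFun g ∧ EquivMod w'.toFun g φ) := by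
  intro g
  constructor
  · rintro ⟨hg, hlt, hmin⟩
    have hdeg : g.degree = φ.degree :=
      le_antisymm (hmin φ haug.1.1 (haug.apply_self ▸ haug.2.1)) (haug.degree_le_of_lt hlt)
    have hequiv : EquivMod w'.toFun g φ :=
      equivMod_of_lt_map_sub <| hlt.trans_le <| (haug.apply_of_degree_eq hg hdeg).trans_le <|
        min_le_left _ _
    exact ⟨haug.1.of_equivMod hg hdeg hequiv, hequiv⟩
  · rintro ⟨hkey, hequiv⟩
    have hdeg : g.degree = φ.degree :=
      le_antisymm (hkey.degree_le_of_equivMod haug.1.1.ne_zero hequiv.symm)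
        (haug.1.degree_le_of_equivMod hkey.1.ne_zero hequiv)
    refine ⟨hkey.1, ?_, fun h _ hlt => hdeg ▸ haug.degree_le_of_lt hlt⟩
    rw [haug.apply_of_degree_eq hkey.1 hdeg]
    exact lt_min hequiv.1 (hequiv.2 ▸ haug.2.1)

end MLV
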